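/- Let F ∈ B_c(T) be real-valued and let n be a nonzero integer. Then |f̂(n)| ≤ 2√2·|n|·‖f − τ_{π/n} f‖_T, where ‖f − τ_{π/n} f‖_T = sup{ |(F(β) − F(β − π/n)) − (F(α) − F(α − π/n))| : α ≤ β ≤ α + 2π } is the Alexiewicz norm of the difference between f and its translate by π/n. -/

import Mathlib

/-!
Put `s = π / n` and `H x = F x - F (x - s)`, a continuous `2π`-periodic function whose
oscillation is at most `M = ‖f - τ_s f‖_𝕋`. Since `e^{-int}` changes sign under `t ↦ t + s`,
substituting `t ↦ t - s` in `∫ F (t - s) e^{-int} dt` and using `F (x + 2π) = F x + F π` gives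
`f̂(n) = (i n / 2) ∫_{-π}^{π} H t e^{-int} dt`. As `∫_{-π}^{π} e^{-int} dt = 0`, `H` may be replaced
by `H - c` with `|H - c| ≤ M / 2`, whence `|f̂(n)| ≤ (π / 2) |n| M ≤ 2√2 |n| M`.
-/

open MeasureTheory Real Function Set

theorem exists_forall_abs_sub_le_half {ι : Type*} [Nonempty ι] {f : ι → ℝ} {M : ℝ}
    (h : ∀ u v, f u - f v ≤ M) : ∃ c, ∀ t, |f t - c| ≤ M / 2 := by
  obtain ⟨v₀⟩ := ‹Nonempty ι›
  have hbdd : BddAbove (range f) :=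
    ⟨f v₀ + M, forall_mem_range.2 fun u => by linarith [h u v₀]⟩
  refine ⟨sSup (range f) - M / 2, fun t => abs_le.2 ⟨?_, ?_⟩⟩
  · have : sSup (range f) ≤ f t + M :=
      csSup_le (range_nonempty f) (forall_mem_range.2 fun u => by linarith [h u t])
    linarith
  · linarith [le_csSup hbdd (mem_range_self t)]

/-- `‖H'‖_𝕋` for the `2π`-periodic distribution `H'`, read off its primitive `H`. -/
noncomputable def alexiewiczNorm (H : ℝ → ℝ) : ℝ :=
  sSup {r : ℝ | ∃ α β : ℝ, α ≤ β ∧ β ≤ α + 2 * π ∧ r = |H β - H α|}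

theorem alexiewiczNorm_nonneg (H : ℝ → ℝ) : 0 ≤ alexiewiczNorm H :=
  Real.sSup_nonneg <| by rintro _ ⟨α, β, -, -, rfl⟩; exact abs_nonneg _

theorem abs_sub_le_alexiewiczNorm {H : ℝ → ℝ} (hH : Continuous H) (hper : Periodic H (2 * π))
    (u v : ℝ) : |H u - H v| ≤ alexiewiczNorm H := by
  obtain ⟨C, hC⟩ := Metric.isBounded_iff.1 (hper.isBounded_of_continuous two_pi_pos.ne' hH)
  have hbdd : BddAbove {r : ℝ | ∃ α β : ℝ, α ≤ β ∧ β ≤ α + 2 * π ∧ r = |H β - H α|} := by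
    refine ⟨C, ?_⟩
    rintro _ ⟨α, β, -, -, rfl⟩
    exact hC (mem_range_self β) (mem_range_self α)
  obtain ⟨w, ⟨hvw, hwv⟩, hw⟩ := hper.exists_mem_Ico two_pi_pos u v
  exact le_csSup hbdd ⟨v, w, hvw, hwv.le, by rw [hw]⟩

theorem intervalIntegral_add_period_eq_of_map_add {E : Type*} [NormedAddCommGroup E]
    [NormedSpace ℝ E] {Φ ψ : ℝ → E} {T : ℝ} (hΦ : Continuous Φ)
    (h : ∀ t, Φ (t + T) = Φ t + ψ t) (a b : ℝ) :
    ∫ t in a..a + T, Φ t = (∫ t in b..b + T, Φ t) + ∫ t in b..a, ψ t := by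
  have hi : ∀ c d : ℝ, IntervalIntegrable Φ volume c d := fun c d => hΦ.intervalIntegrable c d
  have hψ : ∫ t in b..a, ψ t = (∫ t in b + T..a + T, Φ t) - ∫ t in b..a, Φ t := by
    simp_rw [fun t => eq_sub_of_add_eq' (h t).symm]
    have hiT : IntervalIntegrable (fun t => Φ (t + T)) volume b a :=
      (hΦ.comp (continuous_add_const T)).intervalIntegrable _ _
    rw [intervalIntegral.integral_sub hiT (hi _ _),
      intervalIntegral.integral_comp_add_right]
  rw [hψ, ← intervalIntegral.integral_add_adjacent_intervals (hi a b) (hi b (a + T)),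
    ← intervalIntegral.integral_add_adjacent_intervals (hi b (b + T)) (hi (b + T) (a + T)),
    intervalIntegral.integral_symm a b]
  abel

theorem intervalIntegral_sub_comp_sub_mul_of_antiperiodic {F e : ℝ → ℂ} {T s : ℝ} {κ : ℂ}
    (hF : Continuous F) (he : Continuous e) (hFT : ∀ t, F (t + T) = F t + κ)
    (heT : Periodic e T) (hes : Antiperiodic e s) (a : ℝ) :
    ∫ t in a..a + T, (F t - F (t - s)) * e t
      = 2 * (∫ t in a..a + T, F t * e t) + κ * ∫ t in a..a - s, e t := by
  have hFe : ∀ t, F (t + T) * e (t + T) = F t * e t + κ * e t := fun t => by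
    rw [hFT, heT]; ring
  have htranslate : ∫ t in a..a + T, F (t - s) * e t
      = -(∫ t in a..a + T, F t * e t) - κ * ∫ t in a..a - s, e t := by
    have hflip : ∀ t, F (t - s) * e t = -(F (t - s) * e (t - s)) := fun t => by
      rw [← mul_neg, ← hes, sub_add_cancel]
    simp_rw [hflip]
    rw [intervalIntegral.integral_neg,
      intervalIntegral.integral_comp_sub_right (fun t => F t * e t),
      show a + T - s = a - s + T by ring,
      intervalIntegral_add_period_eq_of_map_add (Φ := fun t => F t * e t) (hF.mul he) hFe
        (a - s) a,
      intervalIntegral.integral_const_mul, intervalIntegral.integral_symm (a - s) a]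
    ring
  have hi : ∀ G : ℝ → ℂ, Continuous G →
      IntervalIntegrable (fun t => G t * e t) volume a (a + T) :=
    fun G hG => (hG.mul he).intervalIntegrable _ _
  simp_rw [sub_mul]
  rw [intervalIntegral.integral_sub (hi F hF)
    (hi (fun t => F (t - s)) (hF.comp (continuous_sub_right s))), htranslate]
  ring

theorem periodic_exp_neg_I_mul_intCast (n : ℤ) :
    Periodic (fun t : ℝ => Complex.exp (-Complex.I * n * t)) (2 * π) := fun t => by
  have : -Complex.I * n * ↑(t + 2 * π)
      = -Complex.I * n * t + (-n : ℤ) * (2 * π * Complex.I) := by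
    push_cast; ring
  simp only [this, Complex.exp_add, Complex.exp_int_mul_two_pi_mul_I, mul_one]

theorem antiperiodic_exp_neg_I_mul_intCast {n : ℤ} (hn : n ≠ 0) :
    Antiperiodic (fun t : ℝ => Complex.exp (-Complex.I * n * t)) (π / n) := fun t => by
  have : -Complex.I * n * ↑(t + π / n) = -Complex.I * n * t + -(π * Complex.I) := by
    push_cast; field_simp; ring
  simp only [this, Complex.exp_add, Complex.exp_neg, Complex.exp_pi_mul_I]
  simp

theorem exp_neg_I_mul_intCast_mul_neg_pi (n : ℤ) :
    Complex.exp (-Complex.I * n * (-π : ℝ)) = (-1) ^ n := by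
  rw [show -Complex.I * n * (-π : ℝ) = n * (π * Complex.I) by push_cast; ring,
    Complex.exp_int_mul, Complex.exp_pi_mul_I]

theorem norm_exp_neg_I_mul_intCast (n : ℤ) (t : ℝ) :
    ‖Complex.exp (-Complex.I * n * t)‖ = 1 := by
  rw [show -Complex.I * n * t = (-n * t : ℝ) * Complex.I by push_cast; ring]
  exact Complex.norm_exp_ofReal_mul_I _

theorem intervalIntegral_exp_neg_I_mul_intCast {n : ℤ} (hn : n ≠ 0) :
    ∫ t in (-π)..π, Complex.exp (-Complex.I * n * t) = 0 := by
  have hc : -Complex.I * n ≠ 0 := by simp [hn]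
  have hper := periodic_exp_neg_I_mul_intCast n (-π)
  simp only [show -π + 2 * π = π by ring] at hper
  rw [integral_exp_mul_complex hc, hper, sub_self, zero_div]

theorem fourierCoeff_eq_integral_sub_translate {F : ℝ → ℝ} (hF : Continuous F)
    (hFper : ∀ x, F (x + 2 * π) = F x + F π) {n : ℤ} (hn : n ≠ 0) :
    (-1 : ℂ) ^ n * (F π : ℂ)
        + Complex.I * (n : ℂ) * ∫ t in (-π)..π, (F t : ℂ) * Complex.exp (-Complex.I * n * t)
      = Complex.I * n / 2 *
          ∫ t in (-π)..π, ((F t - F (t - π / n) : ℝ) : ℂ) * Complex.exp (-Complex.I * n * t) := by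
  set e : ℝ → ℂ := fun t => Complex.exp (-Complex.I * n * t)
  have hanti := antiperiodic_exp_neg_I_mul_intCast hn
  have key := intervalIntegral_sub_comp_sub_mul_of_antiperiodic (F := fun t => (F t : ℂ))
    (κ := F π) (by fun_prop) (by fun_prop) (fun t => by simp [hFper])
    (periodic_exp_neg_I_mul_intCast n) hanti (-π)
  rw [show -π + 2 * π = π by ring] at key
  have hc : -Complex.I * n ≠ 0 := by simp [hn]
  have hend : ∫ t in -π..-π - π / n, e t = 2 * (-1) ^ n / (Complex.I * n) := by
    rw [integral_exp_mul_complex hc]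
    rw [hanti.sub_eq (-π), exp_neg_I_mul_intCast_mul_neg_pi]
    field_simp
    ring
  push_cast
  rw [key, hend]
  field_simp
  ring

theorem intervalIntegral_sub_const_mul_exp_neg_I_mul_intCast {G : ℝ → ℝ} (hG : Continuous G)
    (c : ℝ) {n : ℤ} (hn : n ≠ 0) :
    ∫ t in (-π)..π, ((G t - c : ℝ) : ℂ) * Complex.exp (-Complex.I * n * t)
      = ∫ t in (-π)..π, (G t : ℂ) * Complex.exp (-Complex.I * n * t) := by
  push_cast
  simp_rw [sub_mul]
  rw [intervalIntegral.integral_sub (by apply Continuous.intervalIntegrable; fun_prop)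
    (by apply Continuous.intervalIntegrable; fun_prop), intervalIntegral.integral_const_mul,
    intervalIntegral_exp_neg_I_mul_intCast hn, mul_zero, sub_zero]

theorem fourier_coeff_le_translate_alexiewicz (F : ℝ → ℝ)
    (hFcont : Continuous F)
    (hFper : ∀ x : ℝ, F (x + 2 * π) = F x + F π)
    (n : ℤ) (hn : n ≠ 0) :
    ‖((-1 : ℂ) ^ n * (F π : ℂ)
        + Complex.I * (n : ℂ) *
          ∫ t in (-π)..π, (F t : ℂ) * Complex.exp (-Complex.I * (n : ℂ) * (t : ℂ)))‖
      ≤ 2 * Real.sqrt 2 * |(n : ℝ)| *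
        sSup {r : ℝ | ∃ α β : ℝ, α ≤ β ∧ β ≤ α + 2 * π ∧
          r = |(F β - F (β - π / (n : ℝ))) - (F α - F (α - π / (n : ℝ)))|} := by
  let H : ℝ → ℝ := fun x => F x - F (x - π / n)
  have hH : Continuous H := by fun_prop
  have hHper : Periodic H (2 * π) := fun x => by
    simp only [H, show x + 2 * π - π / n = x - π / n + 2 * π by ring, hFper]
    ring
  obtain ⟨c, hc⟩ := exists_forall_abs_sub_le_half fun u v =>
    (le_abs_self _).trans (abs_sub_le_alexiewiczNorm hH hHper u v)
  have hint : ‖∫ t in (-π)..π, ((H t - c : ℝ) : ℂ) * Complex.exp (-Complex.I * n * t)‖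
      ≤ alexiewiczNorm H / 2 * |π - -π| :=
    intervalIntegral.norm_integral_le_of_norm_le_const fun t _ => by
      rw [norm_mul, norm_exp_neg_I_mul_intCast, mul_one, Complex.norm_real, Real.norm_eq_abs]
      exact hc t
  have hM := alexiewiczNorm_nonneg H
  change _ ≤ 2 * √2 * |(n : ℝ)| * alexiewiczNorm H
  rw [fourierCoeff_eq_integral_sub_translate hFcont hFper hn,
    ← intervalIntegral_sub_const_mul_exp_neg_I_mul_intCast hH c hn]
  calc _ = |(n : ℝ)| / 2 *
        ‖∫ t in (-π)..π, ((H t - c : ℝ) : ℂ) * Complex.exp (-Complex.I * n * t)‖ := by simp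
    _ ≤ |(n : ℝ)| / 2 * (alexiewiczNorm H / 2 * |π - -π|) := by gcongr
    _ = π / 2 * (|(n : ℝ)| * alexiewiczNorm H) := by
        rw [abs_of_pos (show 0 < π - -π by linarith [pi_pos])]; ring
    _ ≤ 2 * √2 * (|(n : ℝ)| * alexiewiczNorm H) := by
        gcongr
        nlinarith [pi_lt_four, Real.one_lt_sqrt_two]
    _ = 2 * √2 * |(n : ℝ)| * alexiewiczNorm H := by ring
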